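/- If G is a cubic (3-regular) connected graph of order n, then κ_k(G) ≤ κ_{k−1}(G) for all 3 ≤ k ≤ n. -/

import Mathlib

open SimpleGraph
open scoped Classical

/-- An `S`-Steiner tree in `G`: a subgraph of `G` which is a tree and contains `S`. -/
def IsSteinerTree {V : Type*} (G : SimpleGraph V) (S : Set V) (T : G.Subgraph) : Prop :=
  S ⊆ T.verts ∧ T.coe.IsTree

/-- The generalized local connectivity `κ_G(S)`: the maximum number of pairwise
internally disjoint `S`-Steiner trees in `G`. -/
noncomputable def steinerKappa {V : Type*} (G : SimpleGraph V) (S : Set V) : ℕ :=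
  sSup {n | ∃ T : Fin n → G.Subgraph, (∀ i, IsSteinerTree G S (T i)) ∧
    ∀ i j, i ≠ j → (T i).edgeSet ∩ (T j).edgeSet = ∅ ∧ (T i).verts ∩ (T j).verts = S}

/-- The generalized local edge-connectivity `λ_G(S)`: the maximum number of pairwise
edge-disjoint `S`-Steiner trees in `G`. -/
noncomputable def steinerLambda {V : Type*} (G : SimpleGraph V) (S : Set V) : ℕ :=
  sSup {n | ∃ T : Fin n → G.Subgraph, (∀ i, IsSteinerTree G S (T i)) ∧
    ∀ i j, i ≠ j → (T i).edgeSet ∩ (T j).edgeSet = ∅}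

/-- The generalized `k`-connectivity `κ_k(G)` (with the convention that it is `0`
for a disconnected graph). -/
noncomputable def genKappa {V : Type*} [Fintype V] (G : SimpleGraph V) (k : ℕ) : ℕ :=
  if G.Connected then sInf {m | ∃ S : Finset V, S.card = k ∧ steinerKappa G ↑S = m} else 0

/-- The generalized `k`-edge-connectivity `λ_k(G)` (with the convention that it is `0`
for a disconnected graph). -/
noncomputable def genLambda {V : Type*} [Fintype V] (G : SimpleGraph V) (k : ℕ) : ℕ :=
  if G.Connected then sInf {m | ∃ S : Finset V, S.card = k ∧ steinerLambda G ↑S = m} else 0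

/-- The edge-connectivity `λ(G)`: the minimum number of edges whose removal disconnects `G`. -/
noncomputable def edgeConn {V : Type*} [Fintype V] (G : SimpleGraph V) : ℕ :=
  sInf {m | ∃ F : Set (Sym2 V), F ⊆ G.edgeSet ∧ F.ncard = m ∧ ¬ (G.deleteEdges F).Connected}

/-- The vertex connectivity `κ(G)`: the minimum size of a vertex set whose removal
disconnects `G` or leaves at most one vertex. -/
noncomputable def vertexConn {V : Type*} [Fintype V] (G : SimpleGraph V) : ℕ :=
  sInf {m | ∃ S : Finset V, S.card = m ∧
    (¬ (G.induce ((↑S : Set V)ᶜ)).Connected ∨ Fintype.card V ≤ m + 1)}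

/-! Let `S` be a `(k-1)`-set attaining `κ_{k-1}(G)` and `v ∉ S`. Internally disjoint Steiner
trees for `S ∪ {v}` are edge-disjoint, so, `v` having degree 3, at most one of them uses two
edges at `v`. In every other tree `v` is a leaf, and deleting it leaves a Steiner tree for `S`;
the trees so obtained are internally disjoint for `S`. Hence
`κ_k(G) ≤ κ(S ∪ {v}) ≤ κ(S) = κ_{k-1}(G)`. -/

namespace SimpleGraph.Subgraph

variable {V : Type*} {G : SimpleGraph V}

def coeInduceHomDeleteVerts (T : G.Subgraph) (s : Set V) :
    T.coe.induce {x : T.verts | (x : V) ∉ s} →g (T.deleteVerts s).coe where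
  toFun x := ⟨x.1.1, x.1.2, x.2⟩
  map_rel' {x y} h := deleteVerts_adj.2 ⟨x.1.2, x.2, y.1.2, y.2, h⟩

theorem isTree_coe_deleteVerts {T : G.Subgraph} (hT : T.coe.IsTree) {v w : V}
    (hv : (T.neighborSet v).Subsingleton) (hw : w ∈ T.verts) (hwv : w ≠ v) :
    (T.deleteVerts {v}).coe.IsTree := by
  have hle : T.deleteVerts {v} ≤ T := deleteVerts_le
  refine ⟨(connected_iff _).2 ⟨?_, ⟨⟨w, hw, hwv⟩⟩⟩,
    hT.isAcyclic.comap (inclusion hle) (inclusion.injective hle)⟩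
  have hleaf : ∀ x ∉ {x : T.verts | (x : V) ∉ ({v} : Set V)},
      (T.coe.neighborSet x).Subsingleton := by
    intro x hx
    simp only [Set.mem_ofPred_eq, Set.mem_singleton_iff, not_not] at hx
    subst hx
    exact hv.preimage Subtype.val_injective
  refine (hT.connected.preconnected.induce_of_degree_eq_one hleaf).map
    (coeInduceHomDeleteVerts T {v}) ?_
  rintro ⟨x, hxT, hxv⟩
  exact ⟨⟨⟨x, hxT⟩, hxv⟩, rfl⟩

noncomputable def pruneLeaf (T : G.Subgraph) (v : V) : G.Subgraph :=
  if (T.neighborSet v).Subsingleton then T.deleteVerts {v} else T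

variable {T : G.Subgraph} {v : V}

theorem pruneLeaf_le : T.pruneLeaf v ≤ T := by
  unfold pruneLeaf
  split_ifs
  exacts [deleteVerts_le, le_rfl]

theorem mem_verts_pruneLeaf {x : V} (hx : x ∈ T.verts) (hxv : x ≠ v) :
    x ∈ (T.pruneLeaf v).verts := by
  unfold pruneLeaf
  split_ifs
  exacts [⟨hx, hxv⟩, hx]

theorem neighborSet_nontrivial_of_mem_verts_pruneLeaf (hv : v ∈ (T.pruneLeaf v).verts) :
    (T.neighborSet v).Nontrivial := by
  unfold pruneLeaf at hv
  split_ifs at hv with h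
  · exact absurd rfl hv.2
  · exact Set.not_subsingleton_iff.1 h

theorem isTree_coe_pruneLeaf (hT : T.coe.IsTree) {w : V} (hw : w ∈ T.verts) (hwv : w ≠ v) :
    (T.pruneLeaf v).coe.IsTree := by
  by_cases h : (T.neighborSet v).Subsingleton
  · rw [show T.pruneLeaf v = T.deleteVerts {v} from if_pos h]
    exact isTree_coe_deleteVerts hT h hw hwv
  · rwa [show T.pruneLeaf v = T from if_neg h]

theorem neighborSet_disjoint_of_edgeSet_disjoint {H K : G.Subgraph}
    (h : Disjoint H.edgeSet K.edgeSet) (v : V) : Disjoint (H.neighborSet v) (K.neighborSet v) :=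
  Set.disjoint_left.2 fun _ hH hK =>
    h.ne_of_mem (Subgraph.mem_edgeSet.2 hH) (Subgraph.mem_edgeSet.2 hK) rfl

theorem neighborSet_subsingleton_of_edgeSet_disjoint [Fintype (G.neighborSet v)]
    (hdeg : G.degree v ≤ 3) {H K : G.Subgraph} (h : Disjoint H.edgeSet K.edgeSet)
    (hH : (H.neighborSet v).Nontrivial) : (K.neighborSet v).Subsingleton := by
  have hfin : (G.neighborSet v).Finite := Set.toFinite _
  have hHfin := hfin.subset (neighborSet_subset H v)
  have hKfin := hfin.subset (neighborSet_subset K v)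
  by_contra hK
  rw [Set.not_subsingleton_iff] at hK
  have hunion := Set.ncard_union_eq (neighborSet_disjoint_of_edgeSet_disjoint h v) hHfin hKfin
  have hsub : H.neighborSet v ∪ K.neighborSet v ⊆ G.neighborSet v :=
    Set.union_subset (neighborSet_subset H v) (neighborSet_subset K v)
  have hdeg_eq : (G.neighborSet v).ncard = G.degree v := by
    rw [← card_neighborSet_eq_degree, Set.ncard_eq_toFinset_card', Set.toFinset_card]
  have hle := Set.ncard_le_ncard hsub hfin
  have hH2 := Set.one_lt_ncard_iff_nontrivial_and_finite.2 ⟨hH, hHfin⟩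
  have hK2 := Set.one_lt_ncard_iff_nontrivial_and_finite.2 ⟨hK, hKfin⟩
  omega

end SimpleGraph.Subgraph

section SteinerTrees

variable {V : Type*} {G : SimpleGraph V} {S : Set V} {n : ℕ} {T : Fin n → G.Subgraph}

def IsInternallyDisjointSteinerFamily (G : SimpleGraph V) (S : Set V)
    (T : Fin n → G.Subgraph) : Prop :=
  (∀ i, IsSteinerTree G S (T i)) ∧
    ∀ i j, i ≠ j → (T i).edgeSet ∩ (T j).edgeSet = ∅ ∧ (T i).verts ∩ (T j).verts = S

theorem steinerKappa_eq_sSup : steinerKappa G S =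
    sSup {n | ∃ T : Fin n → G.Subgraph, IsInternallyDisjointSteinerFamily G S T} :=
  rfl

namespace IsInternallyDisjointSteinerFamily

theorem disjoint_edgeSet (h : IsInternallyDisjointSteinerFamily G S T) {i j : Fin n}
    (hij : i ≠ j) : Disjoint (T i).edgeSet (T j).edgeSet :=
  Set.disjoint_iff_inter_eq_empty.2 (h.2 i j hij).1

theorem card_le_degree (h : IsInternallyDisjointSteinerFamily G S T) {s t : V}
    [Fintype (G.neighborSet s)] (hs : s ∈ S) (ht : t ∈ S) (hst : s ≠ t) :
    n ≤ G.degree s := by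
  have hnbr : ∀ i, ∃ u, (T i).Adj s u := fun i => by
    obtain ⟨p⟩ := (h.1 i).2.connected.preconnected ⟨s, (h.1 i).1 hs⟩ ⟨t, (h.1 i).1 ht⟩
    exact ⟨_, p.adj_snd (Walk.not_nil_of_ne (by simpa using hst))⟩
  choose u hu using hnbr
  have hinj : Function.Injective fun i => (⟨u i, (T i).adj_sub (hu i)⟩ : G.neighborSet s) := by
    intro i j hij
    by_contra hne
    have huij : u i = u j := congrArg Subtype.val hij
    exact Set.disjoint_left.1 (Subgraph.neighborSet_disjoint_of_edgeSet_disjoint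
      (h.disjoint_edgeSet hne) s) (hu i) (huij ▸ hu j)
  simpa only [Fintype.card_fin, card_neighborSet_eq_degree] using
    Fintype.card_le_of_injective _ hinj

theorem pruneLeaf {v s : V} [Fintype (G.neighborSet v)] (hdeg : G.degree v ≤ 3)
    (h : IsInternallyDisjointSteinerFamily G (insert v S) T) (hv : v ∉ S) (hs : s ∈ S) :
    IsInternallyDisjointSteinerFamily G S fun i => (T i).pruneLeaf v := by
  have hST : ∀ i, S ⊆ (T i).verts := fun i x hx => (h.1 i).1 (Set.mem_insert_of_mem v hx)
  have hS : ∀ i, S ⊆ ((T i).pruneLeaf v).verts := fun i x hx =>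
    Subgraph.mem_verts_pruneLeaf (hST i hx) (ne_of_mem_of_not_mem hx hv)
  refine ⟨fun i => ⟨hS i, Subgraph.isTree_coe_pruneLeaf (h.1 i).2 (hST i hs)
    (ne_of_mem_of_not_mem hs hv)⟩, fun i j hij => ⟨?_, ?_⟩⟩
  · refine Set.subset_empty_iff.1 ((h.2 i j hij).1 ▸ Set.inter_subset_inter ?_ ?_) <;>
      exact Subgraph.edgeSet_mono Subgraph.pruneLeaf_le
  · refine Set.Subset.antisymm (fun x ⟨hxi, hxj⟩ => ?_) fun x hx => ⟨hS i hx, hS j hx⟩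
    have hx : x ∈ insert v S :=
      (h.2 i j hij).2 ▸ ⟨Subgraph.pruneLeaf_le.1 hxi, Subgraph.pruneLeaf_le.1 hxj⟩
    rcases hx with rfl | hxS
    · exact absurd (Subgraph.neighborSet_nontrivial_of_mem_verts_pruneLeaf hxj)
        (Subgraph.neighborSet_subsingleton_of_edgeSet_disjoint hdeg (h.disjoint_edgeSet hij)
          (Subgraph.neighborSet_nontrivial_of_mem_verts_pruneLeaf hxi)).not_nontrivial
    · exact hxS

end IsInternallyDisjointSteinerFamily

theorem steinerKappa_insert_le {v s t : V} [Fintype (G.neighborSet v)]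
    [Fintype (G.neighborSet s)] (hdeg : G.degree v ≤ 3) (hv : v ∉ S) (hs : s ∈ S)
    (ht : t ∈ S) (hst : s ≠ t) : steinerKappa G (insert v S) ≤ steinerKappa G S := by
  rw [steinerKappa_eq_sSup, steinerKappa_eq_sSup]
  exact csSup_le_csSup ⟨G.degree s, fun _ ⟨_, hT⟩ => hT.card_le_degree hs ht hst⟩
    ⟨0, Fin.elim0, fun i => i.elim0, fun i => i.elim0⟩
    fun _ ⟨_, hT⟩ => ⟨_, hT.pruneLeaf hdeg hv hs⟩

end SteinerTrees

theorem genKappa_succ_le {V : Type*} [Fintype V] {G : SimpleGraph V} {k : ℕ}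
    (hk : k < Fintype.card V)
    (h : ∀ S : Finset V, S.card = k → ∀ v ∉ S,
      steinerKappa G (insert v (S : Set V)) ≤ steinerKappa G S) :
    genKappa G (k + 1) ≤ genKappa G k := by
  unfold genKappa
  split_ifs
  swap; · exact le_rfl
  obtain ⟨S, -, hS⟩ := Finset.exists_subset_card_eq (s := (Finset.univ : Finset V))
    (by simpa using hk.le)
  have hne : {m | ∃ S : Finset V, S.card = k ∧ steinerKappa G ↑S = m}.Nonempty :=
    ⟨_, S, hS, rfl⟩
  obtain ⟨S₀, hS₀, hmin⟩ := Nat.sInf_mem hne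
  obtain ⟨v, -, hv⟩ := Finset.exists_mem_notMem_of_card_lt_card (s := S₀)
    (t := Finset.univ) (by simpa [hS₀] using hk)
  calc sInf {m | ∃ S : Finset V, S.card = k + 1 ∧ steinerKappa G ↑S = m}
      ≤ steinerKappa G ↑(insert v S₀) :=
        Nat.sInf_le ⟨_, by rw [Finset.card_insert_of_notMem hv, hS₀], rfl⟩
    _ ≤ steinerKappa G S₀ := Finset.coe_insert v S₀ ▸ h S₀ hS₀ v hv
    _ = sInf {m | ∃ S : Finset V, S.card = k ∧ steinerKappa G ↑S = m} := hmin

theorem stmt10_general {V : Type*} [Fintype V] (G : SimpleGraph V) [DecidableRel G.Adj]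
    (hcubic : ∀ v : V, G.degree v = 3) (k : ℕ)
    (hk : 3 ≤ k) (hkn : k ≤ Fintype.card V) :
    genKappa G k ≤ genKappa G (k - 1) := by
  obtain ⟨m, rfl⟩ : ∃ m, k = m + 1 := ⟨k - 1, by omega⟩
  refine genKappa_succ_le (by omega) fun S hS v hv => ?_
  obtain ⟨s, hs, t, ht, hst⟩ := Finset.one_lt_card.1 (by omega : 1 < S.card)
  exact steinerKappa_insert_le (hcubic v).le (by simpa using hv) hs ht hst

theorem stmt10 {V : Type*} [Fintype V] (G : SimpleGraph V) [DecidableRel G.Adj]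
    (hG : G.Connected) (hcubic : ∀ v : V, G.degree v = 3) (k : ℕ)
    (hk : 3 ≤ k) (hkn : k ≤ Fintype.card V) :
    genKappa G k ≤ genKappa G (k - 1) :=
  stmt10_general G hcubic k hk hkn
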